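/- Let K ⊆ ℝ^d be closed, and assume that for every λ ∈ (0, 1/L] the proximal gradient map x ↦ prox_{λg}(x − λ∇f(x)) maps K into itself. If F satisfies the K-restricted proximal PL inequality with constant ν_K > 0, then F satisfies the K-restricted proximal error bound with constant μ_K = 1/L + 2/ν_K. -/

import Mathlib

noncomputable section

open Metric Set
open Filter Topology
open scoped RealInnerProductSpace

/-- `E d` is the Euclidean space `ℝ^d`. -/
abbrev E (d : ℕ) : Type := EuclideanSpace ℝ (Fin d)

/-- The generalized gradient size
`𝒟_g(x, α) := −2α · min_y [⟨∇f(x), y − x⟩ + (α/2)‖y − x‖² + g(y) − g(x)]`,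
where `f'` is the gradient of `f`. -/
noncomputable def Dg {d : ℕ} (f' : E d → E d) (g : E d → ℝ) (α : ℝ) (x : E d) : ℝ :=
  -(2 * α) * ⨅ y : E d, (⟪f' x, y - x⟫ + α / 2 * ‖y - x‖ ^ 2 + g y - g x)

lemma descent_lemma {d : ℕ} (f : E d → ℝ) (f' : E d → E d) (L : ℝ)
    (hf' : ∀ x, HasGradientAt f (f' x) x)
    (hlip : ∀ x y, ‖f' x - f' y‖ ≤ L * ‖x - y‖) :
    ∀ x y, f y ≤ f x + ⟪f' x, y - x⟫ + L / 2 * ‖y - x‖ ^ 2 := by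
  intro x y
  set v := y - x with hv
  have hline : ∀ t : ℝ, HasDerivAt (fun t : ℝ => x + t • v) v t := by
    intro t
    simpa using ((hasDerivAt_id t).smul_const v).const_add x
  have hφ : ∀ t : ℝ, HasDerivAt (fun t : ℝ => f (x + t • v)) ⟪f' (x + t • v), v⟫ t := by
    intro t
    have h1 := (hf' (x + t • v)).hasFDerivAt.comp_hasDerivAt t (hline t)
    simp at h1; exact h1
  set ψ : ℝ → ℝ := fun t => L * ‖v‖ ^ 2 * t ^ 2 / 2 + t * ⟪f' x, v⟫ - f (x + t • v) with hψdef
  have hψ : ∀ t : ℝ, HasDerivAt ψ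
      (L * ‖v‖ ^ 2 * t + ⟪f' x, v⟫ - ⟪f' (x + t • v), v⟫) t := by
    intro t
    have h1 : HasDerivAt (fun t : ℝ => L * ‖v‖ ^ 2 * t ^ 2 / 2 + t * ⟪f' x, v⟫)
        (L * ‖v‖ ^ 2 * t + ⟪f' x, v⟫) t := by
      have := (((hasDerivAt_pow 2 t).const_mul (L * ‖v‖ ^ 2)).div_const 2).add
        ((hasDerivAt_id t).mul_const ⟪f' x, v⟫)
      exact this.congr_deriv (by rw [show (2:ℕ) - 1 = 1 from rfl]; push_cast; ring)
    exact h1.sub (hφ t)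
  have hψderiv : ∀ t : ℝ, deriv ψ t = L * ‖v‖ ^ 2 * t + ⟪f' x, v⟫ - ⟪f' (x + t • v), v⟫ :=
    fun t => (hψ t).deriv
  have hmono : MonotoneOn ψ (Icc (0:ℝ) 1) := by
    apply monotoneOn_of_deriv_nonneg (convex_Icc 0 1)
    · exact Continuous.continuousOn (by
        apply Continuous.sub
        · fun_prop
        · exact (continuous_iff_continuousAt.2 fun t => (hφ t).continuousAt))
    · intro t _
      exact (hψ t).differentiableAt.differentiableWithinAt
    · intro t ht
      rw [interior_Icc] at ht
      rw [hψderiv t]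
      have h2 : ⟪f' (x + t • v) - f' x, v⟫ ≤ ‖f' (x + t • v) - f' x‖ * ‖v‖ :=
        real_inner_le_norm _ _
      have h3 : ‖f' (x + t • v) - f' x‖ ≤ L * ‖x + t • v - x‖ := hlip _ _
      have h4 : ‖x + t • v - x‖ = t * ‖v‖ := by
        rw [show x + t • v - x = t • v by abel, norm_smul,
          Real.norm_eq_abs, abs_of_pos ht.1]
      have h5 : ⟪f' (x + t • v), v⟫ - ⟪f' x, v⟫ = ⟪f' (x + t • v) - f' x, v⟫ := by
        rw [inner_sub_left]
      have hvnn : (0:ℝ) ≤ ‖v‖ := norm_nonneg v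
      rw [h4] at h3
      have h6 := mul_le_mul_of_nonneg_right h3 hvnn
      nlinarith [h2, h5, h6]
  have h01 := hmono (by norm_num : (0:ℝ) ∈ Icc (0:ℝ) 1) (by norm_num : (1:ℝ) ∈ Icc (0:ℝ) 1)
    (by norm_num)
  have e0 : ψ 0 = - f x := by simp [hψdef]
  have e1 : ψ 1 = L * ‖v‖ ^ 2 / 2 + ⟪f' x, v⟫ - f y := by
    simp only [hψdef, one_pow, one_smul, one_mul]
    have : x + v = y := by rw [hv]; abel
    rw [this]; ring
  rw [e0, e1] at h01
  linarith


lemma pos_small (A B : ℝ) (hB : 0 ≤ B) (h : ∀ t : ℝ, t ∈ Set.Ioc (0:ℝ) 1 → 0 ≤ A + t * B) :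
    0 ≤ A := by
  by_contra hA
  push_neg at hA
  set t : ℝ := min 1 (-A / (2 * (B + 1))) with ht
  have hBpos : 0 < B + 1 := by linarith
  have htpos : 0 < t := lt_min one_pos (div_pos (by linarith) (by linarith))
  have ht1 : t ≤ 1 := min_le_left _ _
  have h2 : t ≤ -A / (2 * (B + 1)) := min_le_right _ _
  have h3 : t * B ≤ (-A / (2 * (B + 1))) * B := mul_le_mul_of_nonneg_right h2 hB
  have h4 : (-A / (2 * (B + 1))) * B < -A := by
    rw [div_mul_eq_mul_div, div_lt_iff₀ (by linarith)]
    nlinarith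
  have := h t ⟨htpos, ht1⟩
  linarith

/-- subgradient inequality at a prox point: if `p` minimizes `g y + c ‖y - u‖²`
then `2c(u - p)` is a subgradient of `g` at `p`. -/
lemma prox_subgrad {d : ℕ} (g : E d → ℝ) (hg : ConvexOn ℝ Set.univ g)
    (c : ℝ) (hc : 0 < c) (p u : E d)
    (hmin : ∀ y, g p + c * ‖p - u‖ ^ 2 ≤ g y + c * ‖y - u‖ ^ 2) :
    ∀ w, g p + 2 * c * ⟪u - p, w - p⟫ ≤ g w := by
  intro w
  have key : ∀ t : ℝ, t ∈ Set.Ioc (0:ℝ) 1 →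
      0 ≤ (g w - g p + 2 * c * ⟪p - u, w - p⟫) + t * (c * ‖w - p‖ ^ 2) := by
    intro t ht
    have hcvx : g (p + t • (w - p)) ≤ (1 - t) * g p + t * g w := by
      have h1 := hg.2 (mem_univ p) (mem_univ w) (by linarith [ht.2] : (0:ℝ) ≤ 1 - t)
        (le_of_lt ht.1) (by ring)
      have h2 : (1 - t) • p + t • w = p + t • (w - p) := by
        rw [smul_sub]; module
      rwa [h2] at h1
    have hnorm : ‖p + t • (w - p) - u‖ ^ 2
        = ‖p - u‖ ^ 2 + 2 * (t * ⟪p - u, w - p⟫) + t ^ 2 * ‖w - p‖ ^ 2 := by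
      have e : p + t • (w - p) - u = (p - u) + t • (w - p) := by abel
      rw [e, norm_add_sq_real, real_inner_smul_right, norm_smul, Real.norm_eq_abs,
        mul_pow, sq_abs]
    have hm := hmin (p + t • (w - p))
    rw [hnorm] at hm
    have ht0 := ht.1
    have key2 : 0 ≤ t * ((g w - g p + 2 * c * ⟪p - u, w - p⟫) + t * (c * ‖w - p‖ ^ 2)) := by
      nlinarith [hm, hcvx]
    exact nonneg_of_mul_nonneg_right key2 ht0
  have h0 := pos_small _ _ (by positivity) key
  have : ⟪u - p, w - p⟫ = - ⟪p - u, w - p⟫ := by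
    rw [show u - p = -(p - u) by abel, inner_neg_left]
  rw [this]
  linarith

/-- strong minimality: the prox objective grows quadratically away from its minimizer. -/
lemma prox_strongmin {d : ℕ} (g : E d → ℝ) (hg : ConvexOn ℝ Set.univ g)
    (c : ℝ) (hc : 0 < c) (p u : E d)
    (hmin : ∀ y, g p + c * ‖p - u‖ ^ 2 ≤ g y + c * ‖y - u‖ ^ 2) :
    ∀ w, g p + c * ‖p - u‖ ^ 2 + c * ‖w - p‖ ^ 2 ≤ g w + c * ‖w - u‖ ^ 2 := by
  intro w
  have hs := prox_subgrad g hg c hc p u hmin w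
  have hnorm : ‖w - u‖ ^ 2 = ‖w - p‖ ^ 2 + 2 * ⟪w - p, p - u⟫ + ‖p - u‖ ^ 2 := by
    have e : w - u = (w - p) + (p - u) := by abel
    rw [e, norm_add_sq_real]
  have hi : ⟪u - p, w - p⟫ = - ⟪w - p, p - u⟫ := by
    rw [show u - p = -(p - u) by abel, inner_neg_left, real_inner_comm]
  rw [hnorm]
  rw [hi] at hs
  nlinarith [hs]


/-- algebraic identity relating the prox objective and the linearized objective. -/
lemma obj_eq {d : ℕ} (f' : E d → E d) (g : E d → ℝ) (l : ℝ) (hl : 0 < l) (x w : E d) :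
    g w + 1/(2*l) * ‖w - (x - l • f' x)‖ ^ 2
      = (⟪f' x, w - x⟫ + 1/(2*l) * ‖w - x‖ ^ 2 + g w - g x) + (g x + l/2 * ‖f' x‖ ^ 2) := by
  have e : w - (x - l • f' x) = (w - x) + l • f' x := by abel
  rw [e, norm_add_sq_real, real_inner_smul_right, norm_smul, Real.norm_eq_abs,
    abs_of_pos hl, mul_pow]
  have hinner : ⟪w - x, f' x⟫ = ⟪f' x, w - x⟫ := real_inner_comm _ _
  rw [hinner]
  field_simp
  ring


/-- The infimum in `Dg` at `α = L` is attained at `prox (1/L) x`, so PL gives a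
usable bound. -/
lemma PL_concrete {d : ℕ} (g F : E d → ℝ) (f' : E d → E d) (prox : ℝ → E d → E d)
    (L ν Fstar : ℝ) (K : Set (E d)) (hL : 0 < L)
    (hprox : ∀ l ∈ Set.Ioc (0 : ℝ) (1 / L), ∀ x y,
      g (prox l x) + 1 / (2 * l) * ‖prox l x - (x - l • f' x)‖ ^ 2 ≤
        g y + 1 / (2 * l) * ‖y - (x - l • f' x)‖ ^ 2)
    (hPL : ∀ x ∈ K, ν * (F x - Fstar) ≤ 1 / 2 * Dg f' g L x) :
    ∀ x ∈ K, ν * (F x - Fstar) ≤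
      -L * (⟪f' x, prox (1/L) x - x⟫ + L/2 * ‖prox (1/L) x - x‖ ^ 2
        + g (prox (1/L) x) - g x) := by
  intro x hx
  have hLmem : (1/L : ℝ) ∈ Set.Ioc (0:ℝ) (1/L) := ⟨by positivity, le_refl _⟩
  have hcoef : 1/(2*(1/L)) = L/2 := by field_simp
  set q := prox (1/L) x with hq
  set OD : E d → ℝ := fun w => ⟪f' x, w - x⟫ + L / 2 * ‖w - x‖ ^ 2 + g w - g x with hOD
  have hqmin : ∀ y, OD q ≤ OD y := by
    intro y
    have h1 := hprox (1/L) hLmem x y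
    have e1 := obj_eq f' g (1/L) (by positivity) x q
    have e2 := obj_eq f' g (1/L) (by positivity) x y
    rw [e1, e2] at h1
    simp only [hOD]
    rw [hcoef] at h1
    linarith
  have hiInf : (⨅ y : E d, (⟪f' x, y - x⟫ + L / 2 * ‖y - x‖ ^ 2 + g y - g x)) = OD q := by
    apply le_antisymm
    · exact ciInf_le ⟨OD q, by rintro r ⟨y, rfl⟩; exact hqmin y⟩ q
    · exact le_ciInf hqmin
  have hpl := hPL x hx
  rw [Dg, hiInf] at hpl
  calc ν * (F x - Fstar) ≤ 1/2 * (-(2*L) * OD q) := hpl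
  _ = -L * OD q := by ring


set_option maxHeartbeats 1000000 in
/-- One step of proximal gradient with step `lam < 1/L`: geometric decrease of the
value gap and the square-root descent inequality. -/
lemma key_step {d : ℕ} (f g F : E d → ℝ) (f' : E d → E d) (prox : ℝ → E d → E d)
    (L ν Fstar : ℝ) (K : Set (E d))
    (hF : ∀ x, F x = f x + g x) (hL : 0 < L)
    (hf' : ∀ x, HasGradientAt f (f' x) x)
    (hlip : ∀ x y, ‖f' x - f' y‖ ≤ L * ‖x - y‖)
    (hg : ConvexOn ℝ Set.univ g)
    (hlow : ∀ z, Fstar ≤ F z)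
    (hprox : ∀ l ∈ Set.Ioc (0 : ℝ) (1 / L), ∀ x y,
      g (prox l x) + 1 / (2 * l) * ‖prox l x - (x - l • f' x)‖ ^ 2 ≤
        g y + 1 / (2 * l) * ‖y - (x - l • f' x)‖ ^ 2)
    (hν : 0 < ν)
    (hPLc : ∀ x ∈ K, ν * (F x - Fstar) ≤
      -L * (⟪f' x, prox (1/L) x - x⟫ + L/2 * ‖prox (1/L) x - x‖ ^ 2
        + g (prox (1/L) x) - g x))
    (lam : ℝ) (hlam : lam ∈ Set.Ioo 0 (1/L)) (x : E d) (hx : x ∈ K) :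
    F (prox lam x) - Fstar ≤ (1 - lam * ν) * (F x - Fstar) ∧
    Real.sqrt (ν * (1 - lam * L) / 2) * ‖prox lam x - x‖ ≤
      Real.sqrt (F x - Fstar) - Real.sqrt (F (prox lam x) - Fstar) := by
  obtain ⟨hlam0, hlam1⟩ := hlam
  have hlamL : lam * L < 1 := by
    rw [lt_div_iff₀ hL] at hlam1; linarith
  have hmeml : lam ∈ Set.Ioc (0:ℝ) (1/L) := ⟨hlam0, le_of_lt hlam1⟩
  set p := prox lam x with hp
  set c : ℝ := 1/(2*lam) with hc
  have hcpos : 0 < c := by rw [hc]; positivity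
  set a : ℝ := F x - Fstar with ha
  set a' : ℝ := F p - Fstar with ha'
  set O : E d → ℝ := fun w => ⟪f' x, w - x⟫ + c * ‖w - x‖ ^ 2 + g w - g x with hO
  set D : ℝ := ‖p - x‖ with hD
  have hmin := hprox lam hmeml x
  have hstrong := prox_strongmin g hg c hcpos p (x - lam • f' x) (fun y => hmin y)
  clear_value p c a a' O D
  have ha0 : 0 ≤ a := by rw [ha]; linarith [hlow x]
  have ha'0 : 0 ≤ a' := by rw [ha']; linarith [hlow p]
  have hDnn : 0 ≤ D := hD ▸ norm_nonneg _
  have hOmin : ∀ w, O p + c * ‖w - p‖ ^ 2 ≤ O w := by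
    intro w
    have h1 := hstrong w
    have e1 := obj_eq f' g lam hlam0 x p
    have e2 := obj_eq f' g lam hlam0 x w
    rw [← hc] at e1 e2
    simp only [hO]
    linarith [h1, e1, e2]
  have hS6 : O p + c * D ^ 2 ≤ 0 := by
    have h1 := hOmin x
    have hOx : O x = 0 := by simp [hO]
    have hxp : ‖x - p‖ = D := by rw [hD, norm_sub_rev]
    rw [hOx, hxp] at h1
    linarith
  -- S5 : lam * ν * a ≤ - O p
  have hS5 : lam * ν * a ≤ - O p := by
    set q := prox (1/L) x with hq
    set OD : E d → ℝ := fun w => ⟪f' x, w - x⟫ + L / 2 * ‖w - x‖ ^ 2 + g w - g x with hOD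
    have hpl : ν * a ≤ -L * OD q := by
      simp only [hOD, ha]; exact hPLc x hx
    set t : ℝ := lam * L with ht
    have ht0 : 0 < t := by rw [ht]; positivity
    have ht1 : t < 1 := by rw [ht]; exact hlamL
    set y' := x + t • (q - x) with hy'
    have hconv : g y' ≤ (1 - t) * g x + t * g q := by
      have h1 := hg.2 (mem_univ x) (mem_univ q) (by linarith : (0:ℝ) ≤ 1 - t)
        (le_of_lt ht0) (by ring)
      have h2 : (1 - t) • x + t • q = y' := by rw [hy', smul_sub]; module
      rwa [h2] at h1
    have hin : ⟪f' x, y' - x⟫ = t * ⟪f' x, q - x⟫ := by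
      rw [hy', add_sub_cancel_left, real_inner_smul_right]
    have hnr : ‖y' - x‖ ^ 2 = t ^ 2 * ‖q - x‖ ^ 2 := by
      rw [hy', add_sub_cancel_left, norm_smul, Real.norm_eq_abs, mul_pow, sq_abs]
    have hct : c * t ^ 2 = t * (L / 2) := by
      rw [hc, ht]; field_simp
    clear_value q OD t y'
    have hOy' : O y' ≤ t * OD q := by
      simp only [hO, hOD]
      rw [hin, hnr]
      have e3 : c * (t ^ 2 * ‖q - x‖ ^ 2) = t * (L / 2) * ‖q - x‖ ^ 2 := by
        rw [← mul_assoc, hct]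
      rw [e3]
      have e4 : t * (⟪f' x, q - x⟫ + L / 2 * ‖q - x‖ ^ 2 + g q - g x)
          = t * ⟪f' x, q - x⟫ + t * (L / 2) * ‖q - x‖ ^ 2 + ((1 - t) * g x + t * g q) - g x := by
        ring
      rw [e4]
      linarith [hconv]
    have hOp : O p ≤ O y' := by
      have h1 := hOmin y'
      have h2 : 0 ≤ c * ‖y' - p‖ ^ 2 := by positivity
      linarith
    have hODq : L * OD q ≤ -(ν * a) := by linarith [hpl]
    have h6 : lam * (L * OD q) ≤ lam * (-(ν * a)) :=
      mul_le_mul_of_nonneg_left hODq (le_of_lt hlam0)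
    have h7 : O p ≤ t * OD q := le_trans hOp hOy'
    rw [ht] at h7
    nlinarith [h6, h7]
  -- S7 : descent
  have hS7 : a' - a ≤ O p - (c - L/2) * D ^ 2 := by
    have hd := descent_lemma f f' L hf' hlip x p
    have h1 : F p = f p + g p := hF p
    have h2 : F x = f x + g x := hF x
    rw [ha', ha, hD]
    simp only [hO]
    nlinarith [hd]
  have hcl : (0:ℝ) < c - L/2 := by
    rw [hc]
    have h1 : L < 1/lam := by
      rw [lt_div_iff₀ hlam0]; linarith
    have h2 : (1:ℝ)/(2*lam) = (1/lam)/2 := by ring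
    linarith
  have hclD : c - L/2 = (1 - lam*L)/(2*lam) := by
    rw [hc]; field_simp
  have hH1 : lam * ν * a + (c - L/2) * D ^ 2 ≤ a - a' := by
    linarith [hS5, hS7]
  clear hstrong hmin hOmin hS5 hS6 hS7 hprox hPLc hF hf' hlip hg hlow hO hD ha ha' hp hx
  clear O p
  constructor
  · nlinarith [hH1, mul_nonneg (le_of_lt hcl) (sq_nonneg D)]
  · set κ : ℝ := Real.sqrt (ν * (1 - lam * L) / 2) with hκ
    have hκnn : 0 ≤ κ := hκ ▸ Real.sqrt_nonneg _
    have hκsq : κ ^ 2 = ν * (1 - lam * L) / 2 := by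
      rw [hκ]; exact Real.sq_sqrt (by nlinarith)
    set sa := Real.sqrt a with hsa
    set sb := Real.sqrt a' with hsb
    have hsa2 : sa ^ 2 = a := hsa ▸ Real.sq_sqrt ha0
    have hsb2 : sb ^ 2 = a' := hsb ▸ Real.sq_sqrt ha'0
    have hsann : 0 ≤ sa := hsa ▸ Real.sqrt_nonneg _
    have hsbnn : 0 ≤ sb := hsb ▸ Real.sqrt_nonneg _
    have hba : a' ≤ a := by
      nlinarith [hH1, mul_nonneg (mul_nonneg (le_of_lt hlam0) (le_of_lt hν)) ha0,
        mul_nonneg (le_of_lt hcl) (sq_nonneg D)]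
    have hsba : sb ≤ sa := by rw [hsa, hsb]; exact Real.sqrt_le_sqrt hba
    clear_value κ sa sb
    rcases eq_or_lt_of_le ha0 with hz | hapos
    · have haz : a = 0 := hz.symm
      have ha'z : a' = 0 := by linarith
      have hsaz : sa = 0 := by nlinarith
      have hsbz : sb = 0 := by nlinarith
      have hD2 : D ^ 2 ≤ 0 := by
        rw [haz, ha'z] at hH1
        nlinarith [hH1, hcl]
      have hDz : D = 0 := by nlinarith [sq_nonneg D]
      rw [hDz, hsaz, hsbz]
      simp
    · have hsapos : 0 < sa := by nlinarith
      set P := Real.sqrt (lam * ν) with hP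
      set Q := Real.sqrt ((1 - lam*L)/(2*lam)) with hQ
      have hP2 : P ^ 2 = lam * ν := hP ▸ Real.sq_sqrt (by positivity)
      have hQ2 : Q ^ 2 = (1 - lam*L)/(2*lam) :=
        hQ ▸ Real.sq_sqrt (div_nonneg (by linarith) (by linarith))
      have hPnn : 0 ≤ P := hP ▸ Real.sqrt_nonneg _
      have hQnn : 0 ≤ Q := hQ ▸ Real.sqrt_nonneg _
      have hκPQ : κ = P * Q := by
        rw [hP, hQ, ← Real.sqrt_mul (show (0:ℝ) ≤ lam * ν by positivity)
          ((1 - lam*L)/(2*lam)), hκ]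
        congr 1
        field_simp
      clear_value P Q
      have e2 : c - L/2 = Q^2 := by rw [hQ2, hclD]
      have hAMGM : 2 * κ * sa * D ≤ lam * ν * a + (c - L/2) * D ^ 2 := by
        calc 2 * κ * sa * D = 2 * (P * Q) * sa * D := by rw [hκPQ]
          _ ≤ P^2 * sa^2 + Q^2 * D^2 := by nlinarith [sq_nonneg (P * sa - Q * D)]
          _ = lam * ν * a + (c - L/2) * D ^ 2 := by rw [hP2, hsa2, ← e2]
      have hH2 : 2 * κ * sa * D ≤ sa ^ 2 - sb ^ 2 := by
        rw [hsa2, hsb2]; linarith [hAMGM, hH1]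
      nlinarith [hH2, sq_nonneg (sa - sb), hsapos, hDnn, hκnn, hsbnn]


lemma sqrt_pow_comm (r : ℝ) (hr : 0 ≤ r) (n : ℕ) :
    Real.sqrt (r ^ n) = (Real.sqrt r) ^ n := by
  induction n with
  | zero => simp
  | succ n ih => rw [pow_succ, Real.sqrt_mul (pow_nonneg hr n), ih, pow_succ]

set_option maxHeartbeats 1000000 in
/-- Quadratic growth-type bound from restricted PL, via the trajectory of the
proximal gradient method with vanishing step sizes. -/
lemma quad_bound {d : ℕ} (f g F : E d → ℝ) (f' : E d → E d) (prox : ℝ → E d → E d)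
    (L ν Fstar : ℝ) (K : Set (E d))
    (hF : ∀ x, F x = f x + g x) (hL : 0 < L)
    (hf' : ∀ x, HasGradientAt f (f' x) x)
    (hlip : ∀ x y, ‖f' x - f' y‖ ≤ L * ‖x - y‖)
    (hg : ConvexOn ℝ Set.univ g)
    (hlow : ∀ z, Fstar ≤ F z)
    (hFcont : Continuous F)
    (hprox : ∀ l ∈ Set.Ioc (0 : ℝ) (1 / L), ∀ x y,
      g (prox l x) + 1 / (2 * l) * ‖prox l x - (x - l • f' x)‖ ^ 2 ≤
        g y + 1 / (2 * l) * ‖y - (x - l • f' x)‖ ^ 2)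
    (hinv : ∀ l ∈ Set.Ioc (0 : ℝ) (1 / L), ∀ x ∈ K, prox l x ∈ K)
    (hν : 0 < ν)
    (hPLc : ∀ x ∈ K, ν * (F x - Fstar) ≤
      -L * (⟪f' x, prox (1/L) x - x⟫ + L/2 * ‖prox (1/L) x - x‖ ^ 2
        + g (prox (1/L) x) - g x)) :
    ∀ y ∈ K, ν * (infDist y {z | F z = Fstar}) ^ 2 ≤ 2 * (F y - Fstar) := by
  intro y hy
  set Xs : Set (E d) := {z | F z = Fstar} with hXs
  set I : ℝ := infDist y Xs with hIdef
  have hI0 : 0 ≤ I := infDist_nonneg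
  have ha00 : 0 ≤ F y - Fstar := by linarith [hlow y]
  -- step 1: bound for each admissible step size
  have main : ∀ lam, lam ∈ Set.Ioo 0 (1/L) → lam * ν ≤ 1/2 →
      ν * (1 - lam * L) * I ^ 2 ≤ 2 * (F y - Fstar) := by
    intro lam hlam hhalf
    have hlam0 := hlam.1
    have hlamL : lam * L < 1 := by
      have := hlam.2; rw [lt_div_iff₀ hL] at this; linarith
    set κ : ℝ := Real.sqrt (ν * (1 - lam * L) / 2) with hκ
    have hκpos : 0 < κ := by
      rw [hκ]
      apply Real.sqrt_pos.2
      have h1 : 0 < 1 - lam * L := by linarith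
      positivity
    have hκsq : κ ^ 2 = ν * (1 - lam * L) / 2 := by
      rw [hκ]; apply Real.sq_sqrt
      have h1 : 0 < 1 - lam * L := by linarith
      nlinarith [mul_pos hν h1]
    set seq : ℕ → E d := fun n => (fun z => prox lam z)^[n] y with hseq
    have hseq0 : seq 0 = y := rfl
    have hseqS : ∀ n, seq (n + 1) = prox lam (seq n) := by
      intro n; simp only [hseq]; rw [Function.iterate_succ_apply']
    have hKmem : ∀ n, seq n ∈ K := by
      intro n
      induction n with
      | zero => exact hseq0 ▸ hy
      | succ n ih =>
        rw [hseqS n]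
        exact hinv lam ⟨hlam.1, le_of_lt hlam.2⟩ _ ih
    set A : ℕ → ℝ := fun n => F (seq n) - Fstar with hA
    have hA0 : ∀ n, 0 ≤ A n := fun n => by simp only [hA]; linarith [hlow (seq n)]
    have hstep : ∀ n, A (n + 1) ≤ (1 - lam * ν) * A n ∧
        κ * ‖seq (n + 1) - seq n‖ ≤ Real.sqrt (A n) - Real.sqrt (A (n + 1)) := by
      intro n
      have h := key_step f g F f' prox L ν Fstar K hF hL hf' hlip hg hlow hprox hν hPLc
        lam hlam (seq n) (hKmem n)
      constructor
      · have := h.1; simp only [hA]; rw [hseqS n]; exact this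
      · have := h.2; simp only [hA, hκ]; rw [hseqS n]; exact this
    set r : ℝ := 1 - lam * ν with hr
    have hr0 : 0 ≤ r := by rw [hr]; linarith
    have hr1 : r < 1 := by rw [hr]; nlinarith [hlam.1, hν]
    have hgeo : ∀ n, A n ≤ r ^ n * A 0 := by
      intro n
      induction n with
      | zero => simp
      | succ n ih =>
        calc A (n+1) ≤ r * A n := (hstep n).1
          _ ≤ r * (r ^ n * A 0) := mul_le_mul_of_nonneg_left ih hr0
          _ = r ^ (n+1) * A 0 := by ring
    set ρ : ℝ := Real.sqrt r with hρ
    have hρ0 : 0 ≤ ρ := Real.sqrt_nonneg _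
    have hρ1 : ρ < 1 := by
      rw [hρ]
      have := Real.sqrt_lt_sqrt hr0 hr1
      simpa using this
    have hsqgeo : ∀ n, Real.sqrt (A n) ≤ ρ ^ n * Real.sqrt (A 0) := by
      intro n
      calc Real.sqrt (A n) ≤ Real.sqrt (r ^ n * A 0) := Real.sqrt_le_sqrt (hgeo n)
        _ = ρ ^ n * Real.sqrt (A 0) := by
            rw [Real.sqrt_mul (pow_nonneg hr0 n), sqrt_pow_comm r hr0, hρ]
    have hdiststep : ∀ n, dist (seq n) (seq (n+1)) ≤
        (Real.sqrt (A n) - Real.sqrt (A (n+1))) / κ := by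
      intro n
      rw [dist_eq_norm, norm_sub_rev, le_div_iff₀ hκpos]
      calc ‖seq (n+1) - seq n‖ * κ = κ * ‖seq (n+1) - seq n‖ := mul_comm _ _
        _ ≤ _ := (hstep n).2
    have hdistgeo : ∀ n, dist (seq n) (seq (n+1)) ≤ (Real.sqrt (A 0) / κ) * ρ ^ n := by
      intro n
      calc dist (seq n) (seq (n+1)) ≤ (Real.sqrt (A n) - Real.sqrt (A (n+1))) / κ :=
            hdiststep n
        _ ≤ Real.sqrt (A n) / κ :=
            (div_le_div_iff_of_pos_right hκpos).2 (by linarith [Real.sqrt_nonneg (A (n+1))])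
        _ ≤ (ρ ^ n * Real.sqrt (A 0)) / κ := (div_le_div_iff_of_pos_right hκpos).2 (hsqgeo n)
        _ = (Real.sqrt (A 0) / κ) * ρ ^ n := by ring
    have hcauchy : CauchySeq seq := cauchySeq_of_le_geometric ρ _ hρ1 hdistgeo
    obtain ⟨xbar, hxbar⟩ := cauchySeq_tendsto_of_complete hcauchy
    have htel : ∀ n, dist y (seq n) ≤ (Real.sqrt (A 0) - Real.sqrt (A n)) / κ := by
      intro n
      induction n with
      | zero => rw [hseq0]; simp
      | succ n ih =>
        calc dist y (seq (n+1)) ≤ dist y (seq n) + dist (seq n) (seq (n+1)) :=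
            dist_triangle _ _ _
          _ ≤ (Real.sqrt (A 0) - Real.sqrt (A n)) / κ
              + (Real.sqrt (A n) - Real.sqrt (A (n+1))) / κ := by
                exact add_le_add ih (hdiststep n)
          _ = (Real.sqrt (A 0) - Real.sqrt (A (n+1))) / κ := by ring
    have hdy : ∀ n, dist y (seq n) ≤ Real.sqrt (A 0) / κ := by
      intro n
      refine le_trans (htel n) ?_
      exact (div_le_div_iff_of_pos_right hκpos).2 (by linarith [Real.sqrt_nonneg (A n)])
    have hdyx : dist y xbar ≤ Real.sqrt (A 0) / κ :=
      le_of_tendsto (tendsto_const_nhds.dist hxbar) (Eventually.of_forall hdy)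
    have hAtend : Tendsto A atTop (𝓝 0) := by
      apply squeeze_zero hA0 hgeo
      have := (tendsto_pow_atTop_nhds_zero_of_lt_one hr0 hr1).mul_const (A 0)
      simpa using this
    have hFxbar : F xbar = Fstar := by
      have h1 : Tendsto (fun n => F (seq n)) atTop (𝓝 (F xbar)) :=
        (hFcont.tendsto xbar).comp hxbar
      have h2 : Tendsto (fun n => F (seq n)) atTop (𝓝 Fstar) := by
        have h3 : (fun n => F (seq n)) = fun n => A n + Fstar := by
          funext n; simp [hA]
        rw [h3]
        have h4 := hAtend.add_const Fstar
        rw [zero_add] at h4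
        exact h4
      exact tendsto_nhds_unique h1 h2
    have hmem : xbar ∈ Xs := by rw [hXs]; exact hFxbar
    have hIbound : I ≤ Real.sqrt (A 0) / κ :=
      le_trans (infDist_le_dist_of_mem hmem) hdyx
    -- square it
    have hIκ : I * κ ≤ Real.sqrt (A 0) := by
      rw [← le_div_iff₀ hκpos]; exact hIbound
    have hsq : (I * κ) * (I * κ) ≤ Real.sqrt (A 0) * Real.sqrt (A 0) :=
      mul_self_le_mul_self (mul_nonneg hI0 (le_of_lt hκpos)) hIκ
    have hA0y : A 0 = F y - Fstar := by simp only [hA]; rw [hseq0]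
    have hs2 : Real.sqrt (A 0) * Real.sqrt (A 0) = F y - Fstar := by
      rw [hA0y, Real.mul_self_sqrt ha00]
    nlinarith [hsq, hκsq, hs2]
  -- step 2: take lam → 0
  by_contra hcon
  push_neg at hcon
  have hIpos : 0 < ν * I ^ 2 := lt_of_le_of_lt (by positivity) hcon
  set e : ℝ := (ν * I ^ 2 - 2 * (F y - Fstar)) / (ν * I ^ 2) with he
  have he0 : 0 < e := by
    rw [he]; apply div_pos; linarith; exact hIpos
  have he1 : e ≤ 1 := by
    rw [he, div_le_one hIpos]; linarith
  have heE : e * (ν * I ^ 2) = ν * I ^ 2 - 2 * (F y - Fstar) := by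
    rw [he]; field_simp
    exact div_self (by rintro h; simp [h] at hIpos)
  set lam : ℝ := min (e / (2 * L)) (1 / (2 * ν)) with hlamdef
  have hlam0 : 0 < lam := lt_min (by positivity) (by positivity)
  have hlamIoo : lam ∈ Set.Ioo 0 (1/L) := by
    constructor
    · exact hlam0
    · have h1 : lam ≤ e / (2*L) := min_le_left _ _
      have h2 : e / (2*L) ≤ 1 / (2*L) :=
        (div_le_div_iff_of_pos_right (by positivity)).2 he1
      have h3 : (1:ℝ)/(2*L) < 1/L := by
        rw [div_lt_div_iff₀ (by positivity) hL]; linarith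
      linarith
  have hhalf : lam * ν ≤ 1/2 := by
    have h1 : lam ≤ 1/(2*ν) := min_le_right _ _
    rw [← le_div_iff₀ hν]
    calc lam ≤ 1/(2*ν) := h1
      _ = 1/2/ν := by ring
  have hkey := main lam hlamIoo hhalf
  have hlamL2 : lam * L ≤ e / 2 := by
    have h1 : lam ≤ e / (2*L) := min_le_left _ _
    rw [← le_div_iff₀ hL] at *
    calc lam ≤ e/(2*L) := h1
      _ = e/2/L := by ring
  have hmul := mul_le_mul_of_nonneg_left hlamL2 (le_of_lt hIpos)
  nlinarith [hkey, hmul, heE, hIpos, hcon]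



set_option maxHeartbeats 1000000 in
/-- Restricted PL implies restricted EB.
Here `prox l x = prox_{l·g}(x − l∇f(x))` is the proximal gradient map with step size `l`,
characterized as the minimizer of the proximal subproblem, and `𝒳* = {z | F z = F*}`.
Assume `K` is closed and `prox l` maps `K` into itself for all `l ∈ (0, 1/L]`.
If `F = f + g` satisfies the `K`-restricted proximal PL inequality with constant `ν > 0`,
then `F` satisfies the `K`-restricted proximal error bound
`dist(x, 𝒳*) ≤ (1/L + 2/ν) ‖𝒢_{1/L}(x)‖` on `K`, where
`𝒢_{1/L}(x) = L(x − prox (1/L) x)`. -/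
theorem stmt_4 {d : ℕ} (f g F : E d → ℝ) (f' : E d → E d) (prox : ℝ → E d → E d)
    (L ν Fstar : ℝ) (K : Set (E d))
    (hF : ∀ x, F x = f x + g x)
    (hL : 0 < L)
    (hf' : ∀ x, HasGradientAt f (f' x) x)
    (hlip : ∀ x y, ‖f' x - f' y‖ ≤ L * ‖x - y‖)
    (hg : ConvexOn ℝ Set.univ g)
    (hFstar : IsLeast (Set.range F) Fstar)
    (hK : IsClosed K)
    (hprox : ∀ l ∈ Set.Ioc (0 : ℝ) (1 / L), ∀ x y,
      g (prox l x) + 1 / (2 * l) * ‖prox l x - (x - l • f' x)‖ ^ 2 ≤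
        g y + 1 / (2 * l) * ‖y - (x - l • f' x)‖ ^ 2)
    (hinv : ∀ l ∈ Set.Ioc (0 : ℝ) (1 / L), ∀ x ∈ K, prox l x ∈ K)
    (hν : 0 < ν)
    (hPL : ∀ x ∈ K, ν * (F x - Fstar) ≤ 1 / 2 * Dg f' g L x) :
    ∀ x ∈ K, infDist x {z | F z = Fstar} ≤
      (1 / L + 2 / ν) * ‖L • (x - prox (1 / L) x)‖ := by
  -- preliminaries
  have hlow : ∀ z, Fstar ≤ F z := fun z => hFstar.2 ⟨z, rfl⟩
  have hfc : Continuous f := continuous_iff_continuousAt.2 fun x => (hf' x).continuousAt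
  have hgc : Continuous g := by
    have h := hg.continuousOn isOpen_univ
    rw [← continuousOn_univ]
    exact h
  have hFcont : Continuous F := by
    have : F = fun x => f x + g x := funext hF
    rw [this]
    exact hfc.add hgc
  have hPLc := PL_concrete g F f' prox L ν Fstar K hL hprox hPL
  have hquad := quad_bound f g F f' prox L ν Fstar K hF hL hf' hlip hg hlow hFcont
    hprox hinv hν hPLc
  intro x hx
  set Xs : Set (E d) := {z | F z = Fstar} with hXs
  have hmemL : (1/L : ℝ) ∈ Set.Ioc (0:ℝ) (1/L) := ⟨by positivity, le_refl _⟩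
  set p := prox (1/L) x with hp
  have hpK : p ∈ K := hinv (1/L) hmemL x hx
  set G : ℝ := ‖L • (x - p)‖ with hG
  have hGnorm : G = L * ‖x - p‖ := by
    rw [hG, norm_smul, Real.norm_eq_abs, abs_of_pos hL]
  have hGnn : 0 ≤ G := hG ▸ norm_nonneg _
  -- subgradient of g at p
  have hcL : (1:ℝ)/(2*(1/L)) = L/2 := by field_simp
  have hmin' : ∀ y, g p + L/2 * ‖p - (x - (1/L) • f' x)‖ ^ 2 ≤
      g y + L/2 * ‖y - (x - (1/L) • f' x)‖ ^ 2 := by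
    intro y
    have h1 := hprox (1/L) hmemL x y
    rwa [hcL] at h1
  have hsub := prox_subgrad g hg (L/2) (by positivity) p (x - (1/L) • f' x) hmin'
  set s : E d := L • (x - p) - f' x with hs
  have hsubs : ∀ w, g p + ⟪s, w - p⟫ ≤ g w := by
    intro w
    have h1 := hsub w
    have h2 : L • ((1/L) • f' x) = f' x := by
      rw [smul_smul, mul_one_div_cancel (ne_of_gt hL), one_smul]
    have h3 : L • (x - (1/L) • f' x - p) = s := by
      rw [hs, smul_sub, smul_sub, h2, smul_sub]
      abel
    have h4 : (2:ℝ) * (L/2) * ⟪x - (1/L) • f' x - p, w - p⟫ = ⟪s, w - p⟫ := by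
      rw [← h3, real_inner_smul_left]
      ring
    rw [h4] at h1
    exact h1
  -- PL at p gives a bound on F p - Fstar
  have hq := hPLc p hpK
  set q := prox (1/L) p with hq'
  have hODbound : -(⟪f' p, q - p⟫ + L/2 * ‖q - p‖ ^ 2 + g q - g p) ≤ ‖s + f' p‖ ^ 2 / (2*L) := by
    have h1 := hsubs q
    have h2 : ⟪s, q - p⟫ + ⟪f' p, q - p⟫ = ⟪s + f' p, q - p⟫ := (inner_add_left _ _ _).symm
    have h3 : -⟪s + f' p, q - p⟫ ≤ ‖s + f' p‖ * ‖q - p‖ := by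
      have h := real_inner_le_norm (-(s + f' p)) (q - p)
      rwa [inner_neg_left, norm_neg] at h
    have h5 : ‖s + f' p‖ * ‖q - p‖ - L/2 * ‖q - p‖ ^ 2 ≤ ‖s + f' p‖ ^ 2 / (2*L) := by
      rw [le_div_iff₀ (by positivity : (0:ℝ) < 2*L)]
      nlinarith [sq_nonneg (‖s + f' p‖ - L * ‖q - p‖)]
    linarith [h1, h2, h3, h5]
  have hsnorm : ‖s + f' p‖ ≤ 2 * G := by
    have h1 : s + f' p = L • (x - p) + (f' p - f' x) := by rw [hs]; abel
    calc ‖s + f' p‖ = ‖L • (x - p) + (f' p - f' x)‖ := by rw [h1]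
      _ ≤ ‖L • (x - p)‖ + ‖f' p - f' x‖ := norm_add_le _ _
      _ ≤ G + L * ‖p - x‖ := by
          apply add_le_add
          · rw [hG]
          · exact hlip p x
      _ = 2 * G := by rw [norm_sub_rev, ← hGnorm]; ring
  have hFp : ν * (F p - Fstar) ≤ 2 * G ^ 2 := by
    have h1 : ν * (F p - Fstar) ≤ -L * (⟪f' p, q - p⟫ + L/2 * ‖q - p‖ ^ 2 + g q - g p) := hq
    have h2 : -L * (⟪f' p, q - p⟫ + L/2 * ‖q - p‖ ^ 2 + g q - g p)
        ≤ L * (‖s + f' p‖ ^ 2 / (2*L)) := by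
      have := mul_le_mul_of_nonneg_left hODbound (le_of_lt hL)
      linarith [this]
    have h3 : L * (‖s + f' p‖ ^ 2 / (2*L)) = ‖s + f' p‖ ^ 2 / 2 := by
      field_simp
    have h4 : ‖s + f' p‖ ^ 2 ≤ (2*G) ^ 2 := by
      apply sq_le_sq' _ hsnorm
      have := norm_nonneg (s + f' p)
      linarith
    nlinarith [h1, h2, h3, h4]
  -- quadratic bound at p
  have hquadp := hquad p hpK
  have hIpnn : 0 ≤ infDist p Xs := infDist_nonneg
  have h3 : (ν * infDist p Xs) ^ 2 ≤ (2 * G) ^ 2 := by nlinarith [hFp, hquadp, hν.le]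
  have h4 : ν * infDist p Xs ≤ 2 * G := by
    have h5 := Real.sqrt_le_sqrt h3
    rwa [Real.sqrt_sq (mul_nonneg hν.le hIpnn), Real.sqrt_sq (by linarith)] at h5
  have hIp : infDist p Xs ≤ 2 * G / ν := by
    rw [le_div_iff₀ hν]
    linarith [h4]
  have htri : infDist x Xs ≤ infDist p Xs + dist x p := infDist_le_infDist_add_dist
  have hdxp : dist x p = G / L := by
    rw [dist_eq_norm, hGnorm]
    field_simp
  calc infDist x Xs ≤ infDist p Xs + dist x p := htri
    _ ≤ 2 * G / ν + G / L := add_le_add hIp (le_of_eq hdxp)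
    _ = (1 / L + 2 / ν) * G := by ring
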